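/- Let D₁ and D₂ be the distance matrices of two positively weighted path graphs on vertex set {1, …, n} with weight sequences (w₁,…,w_{n−1}) and (w'₁,…,w'_{n−1}). If there exists a bijection σ of {1,…,n} with D₂(σ(i), σ(j)) = D₁(i, j) for all i, j, then either w'ᵢ = wᵢ for all i, or w'ᵢ = w_{n−i} for all i; i.e., a path metric determines the weighted path up to reversal. -/
import Mathlib
set_option maxHeartbeats 1000000


noncomputable def pathD (w : ℕ → ℝ) (i j : ℕ) : ℝ :=
  ∑ k ∈ Finset.Ico (min i j) (max i j), w k

/-- prefix sums -/
noncomputable def pathS (w : ℕ → ℝ) (i : ℕ) : ℝ := ∑ k ∈ Finset.range i, w k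

lemma pathS_lt {n : ℕ} {w : ℕ → ℝ} (hw : ∀ k, k + 1 < n → 0 < w k)
    {i j : ℕ} (hij : i < j) (hj : j < n) : pathS w i < pathS w j := by
  have h : pathS w j - pathS w i = ∑ k ∈ Finset.Ico i j, w k := by
    rw [pathS, pathS, eq_comm, Finset.sum_Ico_eq_sub _ hij.le]
  have hpos : 0 < ∑ k ∈ Finset.Ico i j, w k := by
    apply Finset.sum_pos
    · intro k hk
      simp only [Finset.mem_Ico] at hk
      exact hw k (by omega)
    · exact ⟨i, by simp [Finset.mem_Ico]; omega⟩
  linarith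

lemma pathD_abs {n : ℕ} {w : ℕ → ℝ} (hw : ∀ k, k + 1 < n → 0 < w k)
    {a b : ℕ} (ha : a < n) (hb : b < n) :
    pathD w a b = |pathS w b - pathS w a| := by
  rcases lt_trichotomy a b with h | h | h
  · rw [pathD, min_eq_left h.le, max_eq_right h.le,
      Finset.sum_Ico_eq_sub _ h.le, abs_of_nonneg]
    · rfl
    · have := pathS_lt hw h hb
      simp only [pathS] at this ⊢
      linarith
  · subst h; simp [pathD]
  · rw [pathD, min_eq_right h.le, max_eq_left h.le,
      Finset.sum_Ico_eq_sub _ h.le, abs_of_nonpos]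
    · simp [pathS]
    · have := pathS_lt hw h ha
      simp only [pathS] at this ⊢
      linarith

lemma pathD_succ (w : ℕ → ℝ) (k : ℕ) : pathD w k (k + 1) = w k := by
  have : min k (k+1) = k := by omega
  have h2 : max k (k+1) = k + 1 := by omega
  rw [pathD, this, h2, Nat.Ico_succ_singleton, Finset.sum_singleton]

/-- A strictly monotone permutation of `Fin n` is the identity. -/
lemma perm_strictMono_eq_id {n : ℕ} (σ : Equiv.Perm (Fin n))
    (h : StrictMono σ) : ∀ i, σ i = i := by
  have hsymm : StrictMono (σ.symm : Fin n → Fin n) := by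
    intro a b hab
    rw [← h.lt_iff_lt, σ.apply_symm_apply, σ.apply_symm_apply]
    exact hab
  intro i
  have hwf : WellFoundedLT (Fin n) := inferInstance
  have h1 : i ≤ σ i := @StrictMono.le_apply (Fin n) _ hwf _ h i
  have h2 : σ i ≤ σ.symm (σ i) := @StrictMono.le_apply (Fin n) _ hwf _ hsymm (σ i)
  rw [σ.symm_apply_apply] at h2
  exact le_antisymm h2 h1

/-- A path metric determines the weighted path up to reversal. -/
theorem path_metric_determines_path_up_to_reversal (n : ℕ)
    (w w' : ℕ → ℝ)
    (hw : ∀ k, k + 1 < n → 0 < w k) (hw' : ∀ k, k + 1 < n → 0 < w' k)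
    (σ : Equiv.Perm (Fin n))
    (hσ : ∀ i j : Fin n, pathD w' (σ i) (σ j) = pathD w i j) :
    (∀ k, k + 1 < n → w' k = w k) ∨
    (∀ k, k + 1 < n → w' k = w (n - 2 - k)) := by
  rcases lt_or_ge n 2 with hn | hn
  · left; intro k hk; omega
  set f : Fin n → ℝ := fun i => pathS w' (σ i) with hf
  set g : Fin n → ℝ := fun i => pathS w i with hg
  have H : ∀ i j : Fin n, |f j - f i| = |g j - g i| := by
    intro i j
    have := hσ i j
    rwa [pathD_abs hw' (σ i).isLt (σ j).isLt, pathD_abs hw i.isLt j.isLt] at this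
  have Hsq : ∀ i j : Fin n, (f j - f i) ^ 2 = (g j - g i) ^ 2 := by
    intro i j
    rw [← sq_abs (f j - f i), ← sq_abs (g j - g i), H]
  set i0 : Fin n := ⟨0, by omega⟩ with hi0
  set i1 : Fin n := ⟨1, by omega⟩ with hi1
  have hb : 0 < g i1 - g i0 := by
    have := pathS_lt hw (show (0:ℕ) < 1 by omega) (by omega)
    simpa [hg] using this
  set b : ℝ := g i1 - g i0 with hbdef
  have he : f i1 - f i0 = b ∨ f i1 - f i0 = -b := by
    have := H i0 i1
    rw [abs_of_pos hb] at this
    rcases abs_eq hb.le |>.mp this with h | h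
    · exact Or.inl h
    · exact Or.inr h
  -- the key linear identity
  have key : ∀ ε : ℝ, f i1 - f i0 = ε * b → (ε = 1 ∨ ε = -1) →
      ∀ k : Fin n, f k - f k = 0 := by intro _ _ _ k; ring
  have main : ∀ (ε : ℝ), (ε = 1 ∨ ε = -1) → f i1 - f i0 = ε * b →
      ∀ i j : Fin n, f j - f i = ε * (g j - g i) := by
    intro ε hε heq i j
    have base : ∀ k : Fin n, f k - f i0 = ε * (g k - g i0) := by
      intro k
      have h1 : (f k - f i0) ^ 2 = (g k - g i0) ^ 2 := Hsq i0 k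
      have h2 : (f k - f i1) ^ 2 = (g k - g i1) ^ 2 := Hsq i1 k
      have hfe : f k - f i1 = (f k - f i0) - ε * b := by rw [← heq]; ring
      have hge : g k - g i1 = (g k - g i0) - b := by rw [hbdef]; ring
      rw [hfe, hge] at h2
      rcases hε with h | h <;> subst h <;> nlinarith [hb, h1, h2]
    have := base j
    have h2 := base i
    linarith
  rcases he with heq | heq
  · -- σ strictly monotone, σ = id
    left
    have hmono : StrictMono (σ : Fin n → Fin n) := by
      intro i j hij
      have hgij : g i < g j := pathS_lt hw hij j.isLt
      have : f j - f i = g j - g i := by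
        have := main 1 (Or.inl rfl) (by linarith) i j; linarith
      have hfij : pathS w' (σ i) < pathS w' (σ j) := by
        simp only [hf] at this ⊢; linarith
      by_contra hle
      push_neg at hle
      rcases eq_or_lt_of_le hle with h | h
      · rw [h] at hfij; exact lt_irrefl _ hfij
      · exact absurd (pathS_lt hw' h (σ i).isLt) (by linarith)
    have hid := perm_strictMono_eq_id σ hmono
    intro k hk
    have h1 := hσ ⟨k, by omega⟩ ⟨k+1, by omega⟩
    rw [hid, hid] at h1
    simpa [pathD_succ] using h1
  · -- σ strictly antitone, σ = rev
    right
    have hanti : ∀ i j : Fin n, i < j → σ j < σ i := by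
      intro i j hij
      have hgij : g i < g j := pathS_lt hw hij j.isLt
      have : f j - f i = -(g j - g i) := by
        have := main (-1) (Or.inr rfl) (by linarith) i j; linarith
      have hfij : pathS w' (σ j) < pathS w' (σ i) := by
        simp only [hf] at this ⊢; linarith
      by_contra hle
      push_neg at hle
      rcases eq_or_lt_of_le hle with h | h
      · rw [h] at hfij; exact lt_irrefl _ hfij
      · exact absurd (pathS_lt hw' h (σ j).isLt) (by linarith)
    have hid := perm_strictMono_eq_id ((Fin.revPerm).trans σ)
      (fun i j hij => hanti _ _ (Fin.rev_lt_rev.mpr hij))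
    have hσrev : ∀ i : Fin n, σ (Fin.rev i) = i := fun i => hid i
    intro k hk
    have hik : n - 2 - k < n := by omega
    have hjk : n - 1 - k < n := by omega
    have h1 := hσ ⟨n - 2 - k, hik⟩ ⟨n - 1 - k, hjk⟩
    have hkn : k < n := by omega
    have e1 : σ ⟨n - 2 - k, hik⟩ = ⟨k + 1, hk⟩ := by
      have h5 : (⟨n - 2 - k, hik⟩ : Fin n) = Fin.rev ⟨k + 1, hk⟩ := by
        ext; simp [Fin.rev]; omega
      rw [h5]; exact hσrev _
    have e2 : σ ⟨n - 1 - k, hjk⟩ = ⟨k, hkn⟩ := by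
      have h5 : (⟨n - 1 - k, hjk⟩ : Fin n) = Fin.rev ⟨k, hkn⟩ := by
        ext; simp [Fin.rev]; omega
      rw [h5]; exact hσrev _
    rw [e1, e2] at h1
    have lhs : pathD w' (k+1) k = w' k := by
      rw [pathD, min_comm, max_comm, min_eq_left (by omega), max_eq_right (by omega)]
      rw [Nat.Ico_succ_singleton, Finset.sum_singleton]
    have rhs : pathD w (n - 2 - k) (n - 1 - k) = w (n - 2 - k) := by
      have : n - 1 - k = (n - 2 - k) + 1 := by omega
      rw [this, pathD_succ]
    simp only [Fin.val_mk] at h1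
    rw [lhs, rhs] at h1
    exact h1
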